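/- arXiv:1706.00738 — 3 statements merged into one kernel-verified Lean document; each statement's English description precedes it below -/
import Mathlib

section
/- Let α₁, α₂ ≥ 1 and let g(z)=Σ aₙ zⁿ, h(z)=Σ bₙ zⁿ be analytic on the unit disc with Σ |aₙ|²/c_{α₁}(n) < ∞ and Σ |bₙ|²/c_{α₂}(n) < ∞. If f = g·h with Taylor coefficients dₙ, then (Σ |dₙ|²/c_{α₁+α₂}(n))^{1/2} ≤ (Σ |aₙ|²/c_{α₁}(n))^{1/2} · (Σ |bₙ|²/c_{α₂}(n))^{1/2}. -/
/-
The weights obey the Chu–Vandermonde identity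
`c_{α₁+α₂}(n) = ∑_{k ≤ n} c_{α₁}(k) c_{α₂}(n-k)`: `c_α(n)` is the multiset coefficient
`multichoose α n = (-1)^n choose (-α) n`. Cauchy–Schwarz in the form
`(∑ x_k)² / ∑ w_k ≤ ∑ x_k² / w_k` with `w_k = c_{α₁}(k) c_{α₂}(n-k)` then bounds
`|d_n|² / c_{α₁+α₂}(n)` by the `n`-th term of the Cauchy product of `|a_k|² / c_{α₁}(k)` and
`|b_k|² / c_{α₂}(k)`, and summing over `n` gives the product of the two norms.

Before that, `d` must be identified with the Cauchy product of `a` and `b`: since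
`c_α(n) ≤ α^n`, all three power series converge near `0`, so this is uniqueness of power series
coefficients. If the series defining the left-hand side diverges, its `tsum` is `0`.
-/

noncomputable section

/-- The `n`-th Taylor coefficient of `(1-z)^{-α}`. -/
def binCoeff (α : ℝ) (n : ℕ) : ℝ := Real.Gamma (n + α) / (Real.Gamma α * n.factorial)

open Finset FormalMultilinearSeries
open scoped NNReal

theorem Ring.multichoose_add {R : Type*} [CommRing R] [BinomialRing R] (r s : R) (n : ℕ) :
    Ring.multichoose (r + s) n =
      ∑ ij ∈ antidiagonal n, Ring.multichoose r ij.1 * Ring.multichoose s ij.2 := by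
  have h := Ring.add_choose_eq n (Commute.all (-r) (-s))
  rw [← neg_add, Ring.choose_neg'] at h
  simp only [Ring.choose_neg', smul_mul_smul_comm] at h
  rw [sum_congr rfl fun ij hij => by
    rw [← Int.negOnePow_add, ← Nat.cast_add, mem_antidiagonal.mp hij], ← smul_sum] at h
  exact (smul_left_cancel_iff _).mp h

theorem Real.Gamma_add_nat_eq_mul_ascPochhammer {α : ℝ} (hα : 0 < α) (n : ℕ) :
    Real.Gamma (α + n) = Real.Gamma α * (ascPochhammer ℝ n).eval α := by
  induction n with
  | zero => simp
  | succ n ih =>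
    rw [Nat.cast_succ, ← add_assoc, Real.Gamma_add_one (by positivity), ih,
      ascPochhammer_succ_eval]
    ring

section binCoeff

variable {α : ℝ}

theorem binCoeff_eq_ascPochhammer_div (hα : 0 < α) (n : ℕ) :
    binCoeff α n = (ascPochhammer ℝ n).eval α / n.factorial := by
  rw [binCoeff, add_comm, Real.Gamma_add_nat_eq_mul_ascPochhammer hα,
    mul_div_mul_left _ _ (Real.Gamma_pos_of_pos hα).ne']

theorem binCoeff_pos (hα : 0 < α) (n : ℕ) : 0 < binCoeff α n := by
  rw [binCoeff_eq_ascPochhammer_div hα]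
  exact div_pos (ascPochhammer_pos n α hα) (by positivity)

theorem binCoeff_eq_multichoose (hα : 0 < α) (n : ℕ) : binCoeff α n = Ring.multichoose α n := by
  rw [binCoeff_eq_ascPochhammer_div hα, ← Polynomial.ascPochhammer_smeval_eq_eval,
    ← Ring.factorial_nsmul_multichoose_eq_ascPochhammer, nsmul_eq_mul,
    mul_div_cancel_left₀ _ (by positivity)]

theorem binCoeff_add {β : ℝ} (hα : 0 < α) (hβ : 0 < β) (n : ℕ) :
    binCoeff (α + β) n = ∑ k ∈ range (n + 1), binCoeff α k * binCoeff β (n - k) := by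
  rw [← Nat.sum_antidiagonal_eq_sum_range_succ (fun i j => binCoeff α i * binCoeff β j)]
  simp only [binCoeff_eq_multichoose hα, binCoeff_eq_multichoose hβ,
    binCoeff_eq_multichoose (add_pos hα hβ), Ring.multichoose_add]

theorem ascPochhammer_eval_le_pow_mul_factorial (hα : 1 ≤ α) (n : ℕ) :
    (ascPochhammer ℝ n).eval α ≤ α ^ n * n.factorial := by
  induction n with
  | zero => simp
  | succ n ih =>
    rw [ascPochhammer_succ_eval, Nat.factorial_succ, Nat.cast_mul, pow_succ]
    have : α + n ≤ α * (n + 1) := by nlinarith [(n.cast_nonneg : (0 : ℝ) ≤ n)]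
    calc (ascPochhammer ℝ n).eval α * (α + n) ≤ α ^ n * n.factorial * (α * (n + 1)) := by
          gcongr
      _ = _ := by push_cast; ring

theorem binCoeff_le_pow (hα : 1 ≤ α) (n : ℕ) : binCoeff α n ≤ α ^ n := by
  rw [binCoeff_eq_ascPochhammer_div (by linarith), div_le_iff₀ (by positivity)]
  exact ascPochhammer_eval_le_pow_mul_factorial hα n

end binCoeff

def cauchyProduct {R : Type*} [Semiring R] (a b : ℕ → R) (n : ℕ) : R :=
  ∑ k ∈ range (n + 1), a k * b (n - k)

theorem cauchyProduct_mul_pow {R : Type*} [CommSemiring R] (a b : ℕ → R) (z : R) (n : ℕ) :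
    cauchyProduct a b n * z ^ n =
      cauchyProduct (fun k => a k * z ^ k) (fun k => b k * z ^ k) n := by
  rw [cauchyProduct, cauchyProduct, sum_mul]
  refine sum_congr rfl fun k hk => ?_
  rw [← pow_mul_pow_sub z (Nat.le_of_lt_succ (mem_range.mp hk))]
  ring

theorem summable_norm_cauchyProduct {R : Type*} [NormedRing R] {a b : ℕ → R}
    (ha : Summable fun n => ‖a n‖) (hb : Summable fun n => ‖b n‖) :
    Summable fun n => ‖cauchyProduct a b n‖ :=
  summable_norm_sum_mul_range_of_summable_norm ha hb

theorem tsum_mul_tsum_eq_tsum_cauchyProduct {R : Type*} [NormedRing R] [CompleteSpace R]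
    {a b : ℕ → R} (ha : Summable fun n => ‖a n‖) (hb : Summable fun n => ‖b n‖) :
    (∑' n, a n) * ∑' n, b n = ∑' n, cauchyProduct a b n :=
  tsum_mul_tsum_eq_tsum_sum_range_of_summable_norm ha hb

section PowerSeries

variable {𝕜 : Type*} [RCLike 𝕜] {c : ℕ → 𝕜} {r : ℝ≥0}

theorem le_radius_ofScalars_of_summable
    (h : ∀ z : 𝕜, ‖z‖ < r → Summable fun n => ‖c n * z ^ n‖) :
    (r : ENNReal) ≤ (ofScalars 𝕜 c).radius := by
  refine ENNReal.le_of_forall_nnreal_lt fun ρ hρ => le_radius_of_summable_norm _ ?_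
  have hρ : ‖((ρ : ℝ) : 𝕜)‖ < r := by simpa using hρ
  simpa [ofScalars_norm] using h _ hρ

theorem summable_norm_mul_pow_of_le_radius (hc : (r : ENNReal) ≤ (ofScalars 𝕜 c).radius)
    {z : 𝕜} (hz : ‖z‖ < r) : Summable fun n => ‖c n * z ^ n‖ := by
  have hz : z ∈ Metric.eball (0 : 𝕜) (ofScalars 𝕜 c).radius := by
    rw [mem_eball_zero_iff]
    exact lt_of_lt_of_le (by simpa [enorm, ← NNReal.coe_lt_coe] using hz) hc
  simpa [ofScalars_apply_eq, mul_comm] using (ofScalars 𝕜 c).summable_norm_apply hz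

theorem hasFPowerSeriesOnBall_ofScalars {F : 𝕜 → 𝕜} (hr : 0 < r)
    (hc : (r : ENNReal) ≤ (ofScalars 𝕜 c).radius)
    (hF : ∀ z : 𝕜, ‖z‖ < r → F z = ∑' n, c n * z ^ n) :
    HasFPowerSeriesOnBall F (ofScalars 𝕜 c) 0 r where
  r_le := hc
  r_pos := by simpa using hr
  hasSum {z} hz := by
    have hz : ‖z‖ < r := by simpa [enorm, ← NNReal.coe_lt_coe] using hz
    simpa [ofScalars_apply_eq, mul_comm, hF z hz] using
      (summable_norm_mul_pow_of_le_radius hc hz).of_norm.hasSum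

theorem eq_cauchyProduct_of_mul_eq {a b d : ℕ → 𝕜} {g h f : 𝕜 → 𝕜} (hr : 0 < r)
    (ha : (r : ENNReal) ≤ (ofScalars 𝕜 a).radius) (hb : (r : ENNReal) ≤ (ofScalars 𝕜 b).radius)
    (hd : (r : ENNReal) ≤ (ofScalars 𝕜 d).radius)
    (hg : ∀ z : 𝕜, ‖z‖ < r → g z = ∑' n, a n * z ^ n)
    (hh : ∀ z : 𝕜, ‖z‖ < r → h z = ∑' n, b n * z ^ n)
    (hfd : ∀ z : 𝕜, ‖z‖ < r → f z = ∑' n, d n * z ^ n)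
    (hfgh : ∀ z : 𝕜, ‖z‖ < r → f z = g z * h z) :
    d = cauchyProduct a b := by
  have hab : (r : ENNReal) ≤ (ofScalars 𝕜 (cauchyProduct a b)).radius := by
    refine le_radius_ofScalars_of_summable fun z hz => ?_
    simp only [cauchyProduct_mul_pow]
    exact summable_norm_cauchyProduct
      (summable_norm_mul_pow_of_le_radius ha hz) (summable_norm_mul_pow_of_le_radius hb hz)
  have hfab : ∀ z : 𝕜, ‖z‖ < r → f z = ∑' n, cauchyProduct a b n * z ^ n := fun z hz => by
    simp only [cauchyProduct_mul_pow, hfgh z hz, hg z hz, hh z hz]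
    exact tsum_mul_tsum_eq_tsum_cauchyProduct
      (summable_norm_mul_pow_of_le_radius ha hz) (summable_norm_mul_pow_of_le_radius hb hz)
  exact ofScalars_series_injective 𝕜 𝕜 <|
    (hasFPowerSeriesOnBall_ofScalars hr hd hfd).hasFPowerSeriesAt.eq_formalMultilinearSeries
      (hasFPowerSeriesOnBall_ofScalars hr hab hfab).hasFPowerSeriesAt

end PowerSeries

section WeightedNorm

variable {α β : ℝ} {E R : Type*} [SeminormedAddGroup E] [NormedRing R]

theorem sq_norm_div_binCoeff_nonneg (hα : 0 < α) (x : E) (n : ℕ) :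
    0 ≤ ‖x‖ ^ 2 / binCoeff α n :=
  div_nonneg (sq_nonneg _) (binCoeff_pos hα n).le

theorem tsum_sq_norm_div_binCoeff_nonneg (hα : 0 < α) (c : ℕ → E) :
    0 ≤ ∑' n, ‖c n‖ ^ 2 / binCoeff α n :=
  tsum_nonneg fun n => sq_norm_div_binCoeff_nonneg hα (c n) n

theorem norm_sq_le_tsum_mul_pow {c : ℕ → E} (hα : 1 ≤ α)
    (hc : Summable fun n => ‖c n‖ ^ 2 / binCoeff α n) (n : ℕ) :
    ‖c n‖ ^ 2 ≤ (∑' m, ‖c m‖ ^ 2 / binCoeff α m) * α ^ n := by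
  have hpos := binCoeff_pos (by linarith) n
  calc ‖c n‖ ^ 2 = ‖c n‖ ^ 2 / binCoeff α n * binCoeff α n := (div_mul_cancel₀ _ hpos.ne').symm
    _ ≤ (∑' m, ‖c m‖ ^ 2 / binCoeff α m) * α ^ n :=
      mul_le_mul (hc.le_tsum n fun m _ => sq_norm_div_binCoeff_nonneg (by linarith) _ m)
        (binCoeff_le_pow hα n) hpos.le (tsum_sq_norm_div_binCoeff_nonneg (by linarith) c)

theorem le_radius_ofScalars_of_summable_sq_div_binCoeff {𝕜 : Type*} [RCLike 𝕜] {c : ℕ → 𝕜}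
    (hα : 1 ≤ α) (hc : Summable fun n => ‖c n‖ ^ 2 / binCoeff α n) {ρ : ℝ≥0}
    (hρ : α * ρ ^ 2 ≤ 1) :
    (ρ : ENNReal) ≤ (ofScalars 𝕜 c).radius := by
  set T := ∑' m, ‖c m‖ ^ 2 / binCoeff α m
  refine le_radius_of_bound _ (√T) fun n => ?_
  rw [ofScalars_norm]
  refine Real.le_sqrt_of_sq_le ?_
  calc (‖c n‖ * ρ ^ n) ^ 2 = ‖c n‖ ^ 2 * (ρ ^ 2) ^ n := by ring
    _ ≤ T * α ^ n * (ρ ^ 2) ^ n := by gcongr; exact norm_sq_le_tsum_mul_pow hα hc n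
    _ = T * (α * ρ ^ 2) ^ n := by ring
    _ ≤ T * 1 := by
      gcongr
      · exact tsum_sq_norm_div_binCoeff_nonneg (by linarith) c
      · exact pow_le_one₀ (by positivity) hρ
    _ = T := mul_one T

theorem sq_norm_cauchyProduct_div_binCoeff_le (hα : 0 < α) (hβ : 0 < β)
    (a b : ℕ → R) (n : ℕ) :
    ‖cauchyProduct a b n‖ ^ 2 / binCoeff (α + β) n ≤
      cauchyProduct (fun k => ‖a k‖ ^ 2 / binCoeff α k) (fun k => ‖b k‖ ^ 2 / binCoeff β k) n := by
  have hnorm : ‖cauchyProduct a b n‖ ≤ ∑ k ∈ range (n + 1), ‖a k‖ * ‖b (n - k)‖ :=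
    (norm_sum_le _ _).trans (sum_le_sum fun k _ => norm_mul_le _ _)
  calc ‖cauchyProduct a b n‖ ^ 2 / binCoeff (α + β) n
      ≤ (∑ k ∈ range (n + 1), ‖a k‖ * ‖b (n - k)‖) ^ 2 /
          ∑ k ∈ range (n + 1), binCoeff α k * binCoeff β (n - k) := by
        rw [← binCoeff_add hα hβ]
        gcongr
        exact (binCoeff_pos (add_pos hα hβ) n).le
    _ ≤ ∑ k ∈ range (n + 1), (‖a k‖ * ‖b (n - k)‖) ^ 2 / (binCoeff α k * binCoeff β (n - k)) :=
        sq_sum_div_le_sum_sq_div _ _ fun k _ =>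
          mul_pos (binCoeff_pos hα k) (binCoeff_pos hβ (n - k))
    _ = _ := by simp only [cauchyProduct, mul_pow, mul_div_mul_comm]

theorem tsum_sq_norm_cauchyProduct_div_binCoeff_le (hα : 0 < α) (hβ : 0 < β)
    {a b : ℕ → R} (ha : Summable fun n => ‖a n‖ ^ 2 / binCoeff α n)
    (hb : Summable fun n => ‖b n‖ ^ 2 / binCoeff β n) :
    ∑' n, ‖cauchyProduct a b n‖ ^ 2 / binCoeff (α + β) n ≤
      (∑' n, ‖a n‖ ^ 2 / binCoeff α n) * ∑' n, ‖b n‖ ^ 2 / binCoeff β n := by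
  have ha' : Summable fun n => ‖‖a n‖ ^ 2 / binCoeff α n‖ := ha.abs
  have hb' : Summable fun n => ‖‖b n‖ ^ 2 / binCoeff β n‖ := hb.abs
  have hab := summable_norm_cauchyProduct ha' hb'
  rw [tsum_mul_tsum_eq_tsum_cauchyProduct ha' hb']
  exact Summable.tsum_le_tsum (sq_norm_cauchyProduct_div_binCoeff_le hα hβ a b)
    (hab.of_norm.of_nonneg_of_le (fun n => sq_norm_div_binCoeff_nonneg (add_pos hα hβ) _ n)
      (sq_norm_cauchyProduct_div_binCoeff_le hα hβ a b)) hab.of_norm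

theorem eq_cauchyProduct_of_summable_sq_div_binCoeff {𝕜 : Type*} [RCLike 𝕜]
    {a b d : ℕ → 𝕜} {g h f : 𝕜 → 𝕜} (hα : 1 ≤ α) (hβ : 1 ≤ β)
    (hg : ∀ z : 𝕜, ‖z‖ < 1 → g z = ∑' n, a n * z ^ n)
    (hh : ∀ z : 𝕜, ‖z‖ < 1 → h z = ∑' n, b n * z ^ n)
    (hfd : ∀ z : 𝕜, ‖z‖ < 1 → f z = ∑' n, d n * z ^ n)
    (hfgh : ∀ z : 𝕜, ‖z‖ < 1 → f z = g z * h z)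
    (ha : Summable fun n => ‖a n‖ ^ 2 / binCoeff α n)
    (hb : Summable fun n => ‖b n‖ ^ 2 / binCoeff β n)
    (hd : Summable fun n => ‖d n‖ ^ 2 / binCoeff (α + β) n) :
    d = cauchyProduct a b := by
  obtain ⟨ρ, hρ_def⟩ : ∃ ρ : ℝ≥0, (ρ : ℝ) = (α + β)⁻¹ := ⟨⟨_, by positivity⟩, rfl⟩
  have hρ_pos : 0 < ρ := by rw [← NNReal.coe_pos, hρ_def]; positivity
  have hρ_le_one : (ρ : ℝ) ≤ 1 := hρ_def ▸ inv_le_one_of_one_le₀ (by linarith)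
  have hρ : (α + β) * (ρ : ℝ) ^ 2 ≤ 1 := by
    rw [hρ_def, sq, ← mul_assoc, mul_inv_cancel₀ (by positivity), one_mul]
    exact inv_le_one_of_one_le₀ (by linarith)
  have hρα : α * (ρ : ℝ) ^ 2 ≤ 1 := by nlinarith [sq_nonneg (ρ : ℝ)]
  have hρβ : β * (ρ : ℝ) ^ 2 ≤ 1 := by nlinarith [sq_nonneg (ρ : ℝ)]
  have hdisc : ∀ z : 𝕜, ‖z‖ < ρ → ‖z‖ < 1 := fun z hz => hz.trans_le hρ_le_one
  exact eq_cauchyProduct_of_mul_eq hρ_pos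
    (le_radius_ofScalars_of_summable_sq_div_binCoeff hα ha hρα)
    (le_radius_ofScalars_of_summable_sq_div_binCoeff hβ hb hρβ)
    (le_radius_ofScalars_of_summable_sq_div_binCoeff (by linarith) hd hρ)
    (fun z hz => hg z (hdisc z hz)) (fun z hz => hh z (hdisc z hz))
    (fun z hz => hfd z (hdisc z hz)) (fun z hz => hfgh z (hdisc z hz))

end WeightedNorm

theorem logconvexity_coefficients (α₁ α₂ : ℝ) (h₁ : 1 ≤ α₁) (h₂ : 1 ≤ α₂)
    (a b d : ℕ → ℂ) (g h f : ℂ → ℂ)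
    (hg : ∀ z : ℂ, ‖z‖ < 1 → g z = ∑' n, a n * z ^ n)
    (hh : ∀ z : ℂ, ‖z‖ < 1 → h z = ∑' n, b n * z ^ n)
    (hfd : ∀ z : ℂ, ‖z‖ < 1 → f z = ∑' n, d n * z ^ n)
    (hfgh : ∀ z : ℂ, ‖z‖ < 1 → f z = g z * h z)
    (ha : Summable fun n => ‖a n‖ ^ 2 / binCoeff α₁ n)
    (hb : Summable fun n => ‖b n‖ ^ 2 / binCoeff α₂ n) :
    (∑' n, ‖d n‖ ^ 2 / binCoeff (α₁ + α₂) n) ^ ((1 : ℝ) / 2) ≤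
      (∑' n, ‖a n‖ ^ 2 / binCoeff α₁ n) ^ ((1 : ℝ) / 2) *
        (∑' n, ‖b n‖ ^ 2 / binCoeff α₂ n) ^ ((1 : ℝ) / 2) := by
  have hα₁ : 0 < α₁ := by linarith
  have hα₂ : 0 < α₂ := by linarith
  have hA := tsum_sq_norm_div_binCoeff_nonneg hα₁ a
  have hB := tsum_sq_norm_div_binCoeff_nonneg hα₂ b
  by_cases hd : Summable fun n => ‖d n‖ ^ 2 / binCoeff (α₁ + α₂) n
  · rw [← Real.mul_rpow hA hB,
      eq_cauchyProduct_of_summable_sq_div_binCoeff h₁ h₂ hg hh hfd hfgh ha hb hd]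
    exact Real.rpow_le_rpow (tsum_sq_norm_div_binCoeff_nonneg (add_pos hα₁ hα₂) _)
      (tsum_sq_norm_cauchyProduct_div_binCoeff_le hα₁ hα₂ ha hb) (by norm_num)
  · rw [tsum_eq_zero_of_not_summable hd, Real.zero_rpow (by norm_num)]
    positivity
end
end

section
/- Necessity of the weight exponent: fix α > 1 and 0 < p < ∞ and suppose for some β > 1 and C ≥ 1 the inequality ‖f‖_{A^{pα}_β} ≤ C‖f‖_{H^p} holds for all f ∈ H^p, where the test functions f_r(z) = (1-rz)^{-2/p} (0 < r < 1) are admissible. Then β ≥ α. -/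
/-!
Test the inequality on `f_r(z) = (1 - r z)^{-2/p}` with `r = 1 - δ`. On the circle `|z| = s`,
`|1 - r z|⁻²` is a multiple of a Poisson kernel, which gives the exact power mean
`(1 - r²s²)^{-1/p}` and hence `‖f_r‖_{H^p} ≤ δ^{-1/p}`. On the disc of radius `δ/2` about `1 - δ`
one has `|1 - r z| ≤ 3δ` and `1 - |z|² ≍ δ`, so the weighted integral is at least `c δ^{β - 2α}`.
Thus `c' δ^{(β - 2α)/(pα)} ≤ C δ^{-1/p}` for all small `δ`, and comparing the rates of blow-up as
`δ → 0` gives `-1/p ≤ (β - 2α)/(pα)`, i.e. `α ≤ β`.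
-/

noncomputable section

open Real MeasureTheory

/-- The `p`-th power mean of `f` on the circle of radius `r`. -/
def hardyMean (p : ℝ) (f : ℂ → ℂ) (r : ℝ) : ℝ :=
  ((2 * π)⁻¹ *
      ∫ θ in (0 : ℝ)..(2 * π),
        ‖f ((r : ℂ) * Complex.exp ((θ : ℂ) * Complex.I))‖ ^ p) ^ (1 / p)

open Complex Metric Set Filter Topology

lemma le_of_forall_mul_rpow_le_mul_rpow {a b u v : ℝ} (ha : 0 < a)
    (h : ∀ δ ∈ Ioo (0 : ℝ) 1, a * δ ^ u ≤ b * δ ^ v) : v ≤ u := by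
  by_contra! huv
  have hlim : Tendsto (fun δ : ℝ ↦ b * δ ^ (v - u)) (𝓝[>] 0) (𝓝 0) := by
    have h0 := Real.continuousAt_rpow_const 0 (v - u) (Or.inr (sub_pos.2 huv).le)
    rw [ContinuousAt, Real.zero_rpow (sub_pos.2 huv).ne'] at h0
    simpa using (h0.const_mul b).mono_left nhdsWithin_le_nhds
  have hev : ∀ᶠ δ in 𝓝[>] (0 : ℝ), a ≤ b * δ ^ (v - u) := by
    filter_upwards [Ioo_mem_nhdsGT one_pos] with δ hδ
    have hδu : 0 < δ ^ u := Real.rpow_pos_of_pos hδ.1 u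
    rw [Real.rpow_sub hδ.1, ← mul_div_assoc, le_div_iff₀ hδu]
    exact h δ hδ
  linarith [ge_of_tendsto hlim hev]

lemma min_rpow_le_rpow {a b x : ℝ} (ha : 0 < a) (hx : x ∈ Icc a b) (e : ℝ) :
    min (a ^ e) (b ^ e) ≤ x ^ e := by
  rcases le_total 0 e with he | he
  · exact (min_le_left _ _).trans (Real.rpow_le_rpow ha.le hx.1 he)
  · exact (min_le_right _ _).trans (Real.rpow_le_rpow_of_nonpos (ha.trans_le hx.1) hx.2 he)

lemma norm_cpow_neg_two_div_rpow {p : ℝ} (hp : p ≠ 0) (w : ℂ) (q : ℝ) :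
    ‖w ^ (-(2 / p) : ℂ)‖ ^ (p * q) = ‖w‖ ^ (-(2 * q)) := by
  have hcast : (-(2 / p) : ℂ) = ((-(2 / p) : ℝ) : ℂ) := by push_cast; ring
  rw [hcast, norm_cpow_real, ← Real.rpow_mul (norm_nonneg w)]
  congr 1
  field_simp

lemma hardyMean_eq_circleAverage (p : ℝ) (f : ℂ → ℂ) (s : ℝ) :
    hardyMean p f s = circleAverage (fun z ↦ ‖f z‖ ^ p) 0 s ^ (1 / p) := by
  simp [hardyMean, circleAverage_def, circleMap]

lemma ofReal_circleAverage (g : ℂ → ℝ) (c : ℂ) (R : ℝ) :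
    ((circleAverage g c R : ℝ) : ℂ) = circleAverage (fun z ↦ (g z : ℂ)) c R := by
  simp [circleAverage_def, intervalIntegral.integral_ofReal]

lemma norm_one_sub_mul_mul_of_norm_eq {a z : ℂ} {s : ℝ} (hz : ‖z‖ = s) :
    ‖1 - a * z‖ * s = ‖z - starRingEnd ℂ a * s ^ 2‖ := by
  have hzz : starRingEnd ℂ z * z = (s : ℂ) ^ 2 := by
    rw [mul_comm, Complex.mul_conj, Complex.normSq_eq_norm_sq, hz]; push_cast; ring
  calc ‖1 - a * z‖ * s = ‖starRingEnd ℂ z * (1 - a * z)‖ := by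
        rw [norm_mul, Complex.norm_conj, hz, mul_comm]
    _ = ‖starRingEnd ℂ (z - starRingEnd ℂ a * s ^ 2)‖ := by
        congr 1
        rw [mul_sub, mul_one, mul_left_comm, hzz]
        simp [map_sub, map_mul]
    _ = _ := Complex.norm_conj _

theorem circleAverage_inv_norm_one_sub_mul_sq {a : ℂ} {s : ℝ} (hs : 0 < s) (has : ‖a‖ * s < 1) :
    circleAverage (fun z ↦ (‖1 - a * z‖ ^ 2)⁻¹) 0 s = (1 - ‖a‖ ^ 2 * s ^ 2)⁻¹ := by
  -- on `|z| = s`, `|1 - a z|⁻²` is a constant multiple of the Poisson kernel of `ball 0 s` at `w`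
  set w : ℂ := starRingEnd ℂ a * s ^ 2
  have hw : w ∈ ball (0 : ℂ) s := by
    rw [mem_ball_zero_iff, norm_mul, Complex.norm_conj, norm_pow, Complex.norm_real,
      Real.norm_of_nonneg hs.le]
    nlinarith
  have hkernel : EqOn (poissonKernel 0 w)
      (fun z ↦ (1 - ‖a‖ ^ 2 * s ^ 2) • (‖1 - a * z‖ ^ 2)⁻¹) (sphere 0 |s|) := by
    intro z hz
    rw [abs_of_pos hs, mem_sphere_zero_iff_norm] at hz
    have h : ‖1 - a * z‖ * s = ‖z - w‖ := norm_one_sub_mul_mul_of_norm_eq hz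
    have hw' : ‖w‖ = ‖a‖ * s ^ 2 := by simp [w, abs_of_pos hs]
    simp only [poissonKernel_def, sub_zero, hz, hw', ← h, smul_eq_mul]
    field_simp
  have hconst : circleAverage (poissonKernel 0 w) 0 s = 1 := by
    have hpoisson := (diffContOnCl_const (c := (1 : ℂ))).circleAverage_poissonKernel_smul hw
    have hsmul : (poissonKernel 0 w • fun _ ↦ (1 : ℂ)) = fun z ↦ (poissonKernel 0 w z : ℂ) := by
      ext z; simp
    rw [hsmul, ← ofReal_circleAverage] at hpoisson
    exact_mod_cast hpoisson
  rw [circleAverage_congr_sphere hkernel, circleAverage_fun_smul, smul_eq_mul] at hconst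
  exact eq_inv_of_mul_eq_one_right hconst

lemma hardyMean_one_sub_mul_cpow {p r s : ℝ} (hp : 0 < p) (hs : 0 < s) (hrs : |r| * s < 1) :
    hardyMean p (fun z ↦ (1 - (r : ℂ) * z) ^ (-(2 / p) : ℂ)) s
      = (1 - r ^ 2 * s ^ 2) ^ (-(1 / p)) := by
  have hnorm : ∀ w : ℂ, ‖w ^ (-(2 / p) : ℂ)‖ ^ p = (‖w‖ ^ 2)⁻¹ := fun w ↦ by
    simpa [Real.rpow_neg (norm_nonneg w)] using norm_cpow_neg_two_div_rpow hp.ne' w 1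
  have hr : ‖(r : ℂ)‖ = |r| := by simp
  simp only [hardyMean_eq_circleAverage, hnorm,
    circleAverage_inv_norm_one_sub_mul_sq hs (hr ▸ hrs), hr, sq_abs]
  have hpos : 0 ≤ 1 - r ^ 2 * s ^ 2 := by
    have : r ^ 2 * s ^ 2 = (|r| * s) ^ 2 := by rw [mul_pow, sq_abs]
    nlinarith [mul_nonneg (abs_nonneg r) hs.le]
  rw [Real.inv_rpow hpos, ← Real.rpow_neg hpos]

lemma iSup_hardyMean_one_sub_mul_cpow_le {p r : ℝ} (hp : 0 < p) (hr₀ : 0 ≤ r) (hr₁ : r < 1) :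
    ⨆ s : Ioo (0 : ℝ) 1, hardyMean p (fun z ↦ (1 - (r : ℂ) * z) ^ (-(2 / p) : ℂ)) s
      ≤ (1 - r) ^ (-(1 / p)) := by
  have : Nonempty (Ioo (0 : ℝ) 1) := nonempty_Ioo_subtype one_pos
  refine ciSup_le fun ⟨s, hs₀, hs₁⟩ ↦ ?_
  have hrs : r * s ≤ r := mul_le_of_le_one_right hr₀ hs₁.le
  rw [hardyMean_one_sub_mul_cpow hp hs₀ (by rw [abs_of_nonneg hr₀]; linarith)]
  exact Real.rpow_le_rpow_of_nonpos (by linarith)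
    (by nlinarith [mul_nonneg hr₀ hs₀.le]) (by simp [hp.le])

section TestDisc

variable {δ : ℝ} {z : ℂ}

lemma norm_ofReal_one_sub (hδ : δ ≤ 1) : ‖((1 - δ : ℝ) : ℂ)‖ = 1 - δ := by
  rw [Complex.norm_real, Real.norm_of_nonneg (by linarith)]

lemma one_sub_norm_sq_mem_Icc (hδ : δ ∈ Ioo (0 : ℝ) 1) (hz : z ∈ ball ((1 - δ : ℝ) : ℂ) (δ / 2)) :
    1 - ‖z‖ ^ 2 ∈ Icc (δ / 2) (3 * δ) := by
  have hdist : |‖z‖ - (1 - δ)| < δ / 2 := by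
    rw [← norm_ofReal_one_sub hδ.2.le]
    exact (abs_norm_sub_norm_le _ _).trans_lt (mem_ball_iff_norm.1 hz)
  rw [abs_lt] at hdist
  have hz₀ := norm_nonneg z
  constructor <;> nlinarith [hδ.1]

lemma ball_one_sub_subset_ball_zero_one (hδ : δ ∈ Ioo (0 : ℝ) 1) :
    ball ((1 - δ : ℝ) : ℂ) (δ / 2) ⊆ ball 0 1 := fun z hz ↦ by
  rw [mem_ball_zero_iff]
  nlinarith [(one_sub_norm_sq_mem_Icc hδ hz).1, norm_nonneg z, hδ.1]

lemma norm_one_sub_mul_mem_Ioc (hδ : δ ∈ Ioo (0 : ℝ) 1)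
    (hz : z ∈ ball ((1 - δ : ℝ) : ℂ) (δ / 2)) :
    ‖1 - ((1 - δ : ℝ) : ℂ) * z‖ ∈ Ioc 0 (3 * δ) := by
  have hz₁ : ‖z‖ < 1 := mem_ball_zero_iff.1 (ball_one_sub_subset_ball_zero_one hδ hz)
  have hmul : ‖((1 - δ : ℝ) : ℂ) * z‖ < 1 := by
    rw [norm_mul, norm_ofReal_one_sub hδ.2.le]; nlinarith [norm_nonneg z, hδ.1]
  refine ⟨by linarith [norm_sub_norm_le (1 : ℂ) (((1 - δ : ℝ) : ℂ) * z), norm_one (α := ℂ)], ?_⟩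
  have hsplit : 1 - ((1 - δ : ℝ) : ℂ) * z
      = ((δ * (2 - δ) : ℝ) : ℂ) + ((1 - δ : ℝ) : ℂ) * (((1 - δ : ℝ) : ℂ) - z) := by
    push_cast; ring
  have hδ' : δ * (2 - δ) ≤ 2 * δ := by nlinarith [hδ.1]
  calc ‖1 - ((1 - δ : ℝ) : ℂ) * z‖
      ≤ δ * (2 - δ) + (1 - δ) * ‖((1 - δ : ℝ) : ℂ) - z‖ := by
        rw [hsplit]
        refine (norm_add_le _ _).trans_eq ?_
        rw [norm_mul, norm_ofReal_one_sub hδ.2.le, Complex.norm_real,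
          Real.norm_of_nonneg (by nlinarith [hδ.1, hδ.2])]
    _ ≤ 2 * δ + 1 * (δ / 2) := by
        gcongr
        · linarith [hδ.1]
        · exact (mem_ball_iff_norm'.1 hz).le
    _ ≤ 3 * δ := by linarith [hδ.1]

end TestDisc

section BergmanIntegral

variable {α p β : ℝ}

lemma exists_mul_rpow_le_integrand (hα : 0 ≤ α) (hp : p ≠ 0) (hβ : 1 < β) :
    ∃ c > 0, ∀ δ ∈ Ioo (0 : ℝ) 1, ∀ z ∈ ball ((1 - δ : ℝ) : ℂ) (δ / 2),
      c * δ ^ (β - 2 * α - 2) ≤ ‖(1 - ((1 - δ : ℝ) : ℂ) * z) ^ (-(2 / p) : ℂ)‖ ^ (p * α) *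
        (β - 1) * (1 - ‖z‖ ^ 2) ^ (β - 2) / π := by
  set m := min ((1 / 2 : ℝ) ^ (β - 2)) ((3 : ℝ) ^ (β - 2))
  have hm : 0 < m := lt_min (by positivity) (by positivity)
  have hβ₁ : 0 < β - 1 := by linarith
  refine ⟨(3 : ℝ) ^ (-(2 * α)) * (β - 1) * m / π, by positivity, fun δ hδ z hz ↦ ?_⟩
  have hkernel : (3 : ℝ) ^ (-(2 * α)) * δ ^ (-(2 * α))
      ≤ ‖(1 - ((1 - δ : ℝ) : ℂ) * z) ^ (-(2 / p) : ℂ)‖ ^ (p * α) := by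
    obtain ⟨hpos, hle⟩ := norm_one_sub_mul_mem_Ioc hδ hz
    rw [norm_cpow_neg_two_div_rpow hp, ← Real.mul_rpow (by norm_num) hδ.1.le]
    exact Real.rpow_le_rpow_of_nonpos hpos hle (by linarith)
  have hweight : m * δ ^ (β - 2) ≤ (1 - ‖z‖ ^ 2) ^ (β - 2) := by
    obtain ⟨hlo, hhi⟩ := one_sub_norm_sq_mem_Icc hδ hz
    have hscaled : (1 - ‖z‖ ^ 2) / δ ∈ Icc (1 / 2 : ℝ) 3 :=
      ⟨by rw [le_div_iff₀ hδ.1]; linarith, by rw [div_le_iff₀ hδ.1]; linarith⟩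
    calc m * δ ^ (β - 2) ≤ ((1 - ‖z‖ ^ 2) / δ) ^ (β - 2) * δ ^ (β - 2) :=
          mul_le_mul_of_nonneg_right (min_rpow_le_rpow (by norm_num) hscaled _)
            (Real.rpow_nonneg hδ.1.le _)
      _ = (1 - ‖z‖ ^ 2) ^ (β - 2) := by
          rw [← Real.mul_rpow (by linarith [hscaled.1]) hδ.1.le, div_mul_cancel₀ _ hδ.1.ne']
  calc (3 : ℝ) ^ (-(2 * α)) * (β - 1) * m / π * δ ^ (β - 2 * α - 2)
      = (3 : ℝ) ^ (-(2 * α)) * δ ^ (-(2 * α)) * (β - 1) * (m * δ ^ (β - 2)) / π := by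
        rw [show β - 2 * α - 2 = -(2 * α) + (β - 2) by ring, Real.rpow_add hδ.1]
        ring
    _ ≤ _ := by
        gcongr
        exact mul_nonneg hm.le (Real.rpow_nonneg hδ.1.le _)

lemma exists_mul_rpow_le_lintegral (hα : 0 ≤ α) (hp : p ≠ 0) (hβ : 1 < β) :
    ∃ c > 0, ∀ δ ∈ Ioo (0 : ℝ) 1, ENNReal.ofReal (c * δ ^ (β - 2 * α)) ≤
      ∫⁻ z in ball (0 : ℂ) 1,
        ENNReal.ofReal (‖(1 - ((1 - δ : ℝ) : ℂ) * z) ^ (-(2 / p) : ℂ)‖ ^ (p * α) *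
          (β - 1) * (1 - ‖z‖ ^ 2) ^ (β - 2) / π) := by
  obtain ⟨c, hc, hle⟩ := exists_mul_rpow_le_integrand hα hp hβ
  refine ⟨c * π / 4, by positivity, fun δ hδ ↦ ?_⟩
  have hpow : δ ^ (β - 2 * α) = δ ^ (β - 2 * α - 2) * δ ^ 2 := by
    rw [← Real.rpow_natCast, ← Real.rpow_add hδ.1]; norm_num
  calc ENNReal.ofReal (c * π / 4 * δ ^ (β - 2 * α))
      = ENNReal.ofReal (c * δ ^ (β - 2 * α - 2)) * volume (ball ((1 - δ : ℝ) : ℂ) (δ / 2)) := by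
        rw [Complex.volume_ball, ← ENNReal.ofReal_coe_nnreal, NNReal.coe_real_pi,
          ← ENNReal.ofReal_pow (by linarith [hδ.1]), ← ENNReal.ofReal_mul (by positivity),
          ← ENNReal.ofReal_mul (by positivity [hc, hδ.1]), hpow]
        ring_nf
    _ = ∫⁻ _ in ball ((1 - δ : ℝ) : ℂ) (δ / 2), ENNReal.ofReal (c * δ ^ (β - 2 * α - 2)) :=
        (setLIntegral_const _ _).symm
    _ ≤ _ := setLIntegral_mono' measurableSet_ball fun z hz ↦
        ENNReal.ofReal_le_ofReal (hle δ hδ z hz)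
    _ ≤ _ := lintegral_mono_set (ball_one_sub_subset_ball_zero_one hδ)

end BergmanIntegral

/-- Necessity of the weight exponent: if `‖f‖_{A^{pα}_β} ≤ C‖f‖_{H^p}` holds, in particular
for the test functions `f_r(z) = (1-rz)^{-2/p}` with `0 < r < 1`, then `β ≥ α`. -/
theorem weight_exponent_necessary (α p β C : ℝ) (hα : 1 < α) (hp : 0 < p) (hβ : 1 < β)
    (hC : 1 ≤ C)
    (hcontr : ∀ r : ℝ, 0 < r → r < 1 →
      (∫⁻ z in Metric.ball (0 : ℂ) 1,
          ENNReal.ofReal (‖(1 - (r : ℂ) * z) ^ (-(2 / p) : ℂ)‖ ^ (p * α) *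
            (β - 1) * (1 - ‖z‖ ^ 2) ^ (β - 2) / π)) ^ (1 / (p * α)) ≤
        ENNReal.ofReal (C * ⨆ s : Set.Ioo (0 : ℝ) 1,
          hardyMean p (fun z => (1 - (r : ℂ) * z) ^ (-(2 / p) : ℂ)) s)) :
    α ≤ β := by
  have hpα : 0 < p * α := by positivity
  obtain ⟨c, hc, hlower⟩ := exists_mul_rpow_le_lintegral (α := α) (by linarith) hp.ne' hβ
  have hrate : ∀ δ ∈ Ioo (0 : ℝ) 1,
      c ^ (1 / (p * α)) * δ ^ ((β - 2 * α) / (p * α)) ≤ C * δ ^ (-(1 / p)) := by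
    intro δ hδ
    have hbound := (ENNReal.rpow_le_rpow (hlower δ hδ) (one_div_pos.2 hpα).le).trans
      (hcontr (1 - δ) (by linarith [hδ.2]) (by linarith [hδ.1]))
    have hδ₀ := hδ.1
    have hpos : 0 < (c * δ ^ (β - 2 * α)) ^ (1 / (p * α)) := by positivity
    rw [ENNReal.ofReal_rpow_of_nonneg (by positivity) (by positivity),
      ENNReal.ofReal_le_ofReal_iff', or_iff_left hpos.not_ge] at hbound
    calc c ^ (1 / (p * α)) * δ ^ ((β - 2 * α) / (p * α))
        = (c * δ ^ (β - 2 * α)) ^ (1 / (p * α)) := by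
          rw [Real.mul_rpow hc.le (by positivity), ← Real.rpow_mul hδ.1.le, mul_one_div]
      _ ≤ _ := hbound
      _ ≤ C * δ ^ (-(1 / p)) := by
          have hsup := iSup_hardyMean_one_sub_mul_cpow_le hp (r := 1 - δ)
            (by linarith [hδ.2]) (by linarith [hδ.1])
          rw [sub_sub_cancel] at hsup
          exact mul_le_mul_of_nonneg_left hsup (by linarith)
  have hexp := le_of_forall_mul_rpow_le_mul_rpow (Real.rpow_pos_of_pos hc _) hrate
  rw [le_div_iff₀ hpα, show -(1 / p) * (p * α) = -α by field_simp] at hexp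
  linarith

end
end

section
/- For all real α ≥ 2, (α-1)/((⌊α⌋-1)^{1-{α}} ⌊α⌋^{{α}}) ≤ 2/(e·log 2), where {α} is the fractional part of α. -/
/-!
Write `m = ⌊α⌋ - 1`, `t = {α}` and `L = log ((m + 1) / m)`, so that the denominator is
`m * exp (t * L)` and the numerator is `m + t`. The inequality `e * y ≤ exp y` at `y = L * (m + t)`
reduces the claim to `exp u * log 2 ≤ 2 * u` for `u = m * L`. Bernoulli's inequality and
`log (1 + x) ≤ x` place `u` in `[log 2, 1]`, where `exp u / u` is decreasing, so it is largest
at `u = log 2`, i.e. for `⌊α⌋ = 2`.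
-/

open Real

/-- `exp x / x` is antitone on `(0, 1]`, in the form `exp b / b ≤ exp a / a`. -/
lemma mul_exp_sub_le {a b : ℝ} (ha : 0 < a) (hab : a ≤ b) (hb : b ≤ 1) :
    a * exp (b - a) ≤ b := by
  have hd : b - a < 1 := by linarith
  calc a * exp (b - a) ≤ a * (1 / (1 - (b - a))) := by
        gcongr; exact exp_bound_div_one_sub_of_interval (sub_nonneg.2 hab) hd
    _ ≤ b := by
        rw [mul_one_div, div_le_iff₀ (by linarith)]
        nlinarith [mul_nonneg (sub_nonneg.2 hab) (sub_nonneg.2 hb)]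

lemma exp_mul_log_two_le_two_mul {u : ℝ} (h₁ : log 2 ≤ u) (h₂ : u ≤ 1) :
    exp u * log 2 ≤ 2 * u := by
  have h := mul_exp_sub_le (log_pos one_lt_two) h₁ h₂
  rw [exp_sub, exp_log two_pos] at h
  linarith

lemma log_two_le_mul_log_add_one_div {x : ℝ} (hx : 1 ≤ x) :
    log 2 ≤ x * log ((x + 1) / x) := by
  have hx₀ : 0 < x := by linarith
  have bernoulli : 2 ≤ ((x + 1) / x) ^ x := by
    have h := one_add_mul_self_le_rpow_one_add (s := 1 / x) (neg_one_lt_zero.le.trans (by positivity)) hx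
    rwa [mul_one_div_cancel hx₀.ne', one_add_one_eq_two, one_add_div hx₀.ne'] at h
  rw [← log_rpow (by positivity)]
  exact log_le_log two_pos bernoulli

lemma mul_log_add_one_div_le_one {x : ℝ} (hx : 0 < x) : x * log ((x + 1) / x) ≤ 1 := by
  have h := log_le_sub_one_of_pos (x := (x + 1) / x) (by positivity)
  rw [add_div, div_self hx.ne', add_sub_cancel_left, one_add_div hx.ne'] at h
  calc x * log ((x + 1) / x) ≤ x * (1 / x) := by gcongr
    _ = 1 := mul_one_div_cancel hx.ne'

lemma rpow_one_sub_mul_rpow {a b : ℝ} (ha : 0 < a) (hb : 0 < b) (t : ℝ) :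
    a ^ (1 - t) * b ^ t = a * exp (t * log (b / a)) := by
  rw [rpow_def_of_pos ha, rpow_def_of_pos hb, ← exp_add, log_div hb.ne' ha.ne',
    show log a * (1 - t) + log b * t = log a + t * (log b - log a) by ring, exp_add, exp_log ha]

lemma add_div_rpow_one_sub_mul_add_one_rpow_le {m : ℝ} (hm : 1 ≤ m) (t : ℝ) :
    (m + t) / (m ^ (1 - t) * (m + 1) ^ t) ≤ 2 / (exp 1 * log 2) := by
  have hm₀ : 0 < m := by linarith
  set L := log ((m + 1) / m)
  have hL : 0 < L := log_pos ((one_lt_div hm₀).2 (by linarith))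
  rw [rpow_one_sub_mul_rpow hm₀ (by linarith), div_le_div_iff₀ (by positivity) (by positivity)]
  refine le_of_mul_le_mul_left ?_ hL
  calc L * ((m + t) * (exp 1 * log 2)) = exp 1 * (L * (m + t)) * log 2 := by ring
    _ ≤ exp (L * (m + t)) * log 2 := by gcongr; exact exp_one_mul_le_exp
    _ = exp (m * L) * log 2 * exp (t * L) := by
        rw [show L * (m + t) = m * L + t * L by ring, exp_add]; ring
    _ ≤ 2 * (m * L) * exp (t * L) := by
        refine mul_le_mul_of_nonneg_right ?_ (exp_pos _).le
        exact exp_mul_log_two_le_two_mul (log_two_le_mul_log_add_one_div hm)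
          (mul_log_add_one_div_le_one hm₀)
    _ = L * (2 * (m * exp (t * L))) := by ring

theorem interpolation_constant_le (α : ℝ) (hα : 2 ≤ α) :
    (α - 1) / (((⌊α⌋ : ℝ) - 1) ^ (1 - Int.fract α) * (⌊α⌋ : ℝ) ^ Int.fract α) ≤
      2 / (Real.exp 1 * Real.log 2) := by
  have hfloor : (2 : ℝ) ≤ ⌊α⌋ := by exact_mod_cast Int.le_floor.mpr (by exact_mod_cast hα)
  have h := add_div_rpow_one_sub_mul_add_one_rpow_le (m := ⌊α⌋ - 1) (by linarith) (Int.fract α)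
  have hnum : (⌊α⌋ : ℝ) - 1 + Int.fract α = α - 1 := by linarith [Int.floor_add_fract α]
  rwa [sub_add_cancel, hnum] at h
end
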